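/- Let c : ℝ⁶ × ℝ⁶ → ℝ⁶ be the alternating bilinear map with c(e₁,e₂) = e₅, c(e₃,e₄) = e₆, and c(eᵢ,eⱼ) = 0 for all other pairs i < j (the Lie algebra h₃ ⊕ h₃), and let c̃ be the alternating bilinear map with c̃(e₁,e₂) = e₅, c̃(e₁,e₃) = e₆, and c̃(eᵢ,eⱼ) = 0 otherwise (the Lie algebra n₅ ⊕ ℝ). Then there exists a family gₛ ∈ GL(6, ℝ), s ∈ (0,1], such that for all x, y ∈ ℝ⁶ the brackets (gₛ · c)(x, y) := gₛ c(gₛ⁻¹x, gₛ⁻¹y) converge to c̃(x, y) as s → 0. In other words, h₃ ⊕ h₃ degenerates to n₅ ⊕ ℝ. -/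
import Mathlib


/-- The bracket of `h₃ ⊕ h₃ = (0,0,0,0,12,34)`: `c(e₁,e₂) = e₅`, `c(e₃,e₄) = e₆`. -/
noncomputable def cH3H3 (x y : Fin 6 → ℝ) : Fin 6 → ℝ :=
  (x 0 * y 1 - x 1 * y 0) • (Pi.single 4 1 : Fin 6 → ℝ) +
  (x 2 * y 3 - x 3 * y 2) • (Pi.single 5 1 : Fin 6 → ℝ)

/-- The bracket of `n₅ ⊕ ℝ = (0,0,0,0,12,13)`: `c̃(e₁,e₂) = e₅`, `c̃(e₁,e₃) = e₆`. -/
noncomputable def cN5R (x y : Fin 6 → ℝ) : Fin 6 → ℝ :=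
  (x 0 * y 1 - x 1 * y 0) • (Pi.single 4 1 : Fin 6 → ℝ) +
  (x 0 * y 2 - x 2 * y 0) • (Pi.single 5 1 : Fin 6 → ℝ)

@[simp] lemma vec6_five {α : Type*} (a b c d e f : α) : ![a,b,c,d,e,f] 5 = f := rfl

noncomputable def Amap (t : ℝ) : (Fin 6 → ℝ) →ₗ[ℝ] (Fin 6 → ℝ) where
  toFun x := ![x 0, x 1, x 0 + t * x 3, t * x 2, x 4, t * x 5]
  map_add' x y := by funext i; fin_cases i <;> simp [Matrix.cons_val_succ] <;> ring
  map_smul' c x := by funext i; fin_cases i <;> simp [Matrix.cons_val_succ] <;> ring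

noncomputable def Bmap (t : ℝ) : (Fin 6 → ℝ) →ₗ[ℝ] (Fin 6 → ℝ) where
  toFun x := ![x 0, x 1, t⁻¹ * x 3, t⁻¹ * (x 2 - x 0), x 4, t⁻¹ * x 5]
  map_add' x y := by funext i; fin_cases i <;> simp [Matrix.cons_val_succ] <;> ring
  map_smul' c x := by funext i; fin_cases i <;> simp [Matrix.cons_val_succ] <;> ring

lemma hAB (t : ℝ) (ht : t ≠ 0) : (Amap t) ∘ₗ (Bmap t) = LinearMap.id := by
  apply LinearMap.ext; intro x; funext i
  fin_cases i <;> simp [Amap, Bmap, Matrix.cons_val_succ] <;> field_simp <;> ring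

lemma hBA (t : ℝ) (ht : t ≠ 0) : (Bmap t) ∘ₗ (Amap t) = LinearMap.id := by
  apply LinearMap.ext; intro x; funext i
  fin_cases i <;> simp [Amap, Bmap, Matrix.cons_val_succ] <;> field_simp <;> ring

noncomputable def gEq (t : ℝ) : (Fin 6 → ℝ) ≃ₗ[ℝ] (Fin 6 → ℝ) :=
  if h : 0 < t then
    (LinearEquiv.ofLinear (Amap t) (Bmap t) (hAB t h.ne') (hBA t h.ne')).symm
  else LinearEquiv.refl ℝ _


/-- `h₃ ⊕ h₃` degenerates to `n₅ ⊕ ℝ`: there is a family `gₛ ∈ GL(6,ℝ)` with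
`gₛ · c → c̃` as `s → 0⁺`. -/
theorem h3h3_degenerates_to_n5R :
    ∃ g : ℝ → ((Fin 6 → ℝ) ≃ₗ[ℝ] (Fin 6 → ℝ)),
      ∀ x y : Fin 6 → ℝ,
        Filter.Tendsto (fun s : ℝ => g s (cH3H3 ((g s).symm x) ((g s).symm y)))
          (nhdsWithin 0 (Set.Ioi 0)) (nhds (cN5R x y)) := by
  refine ⟨gEq, fun x y => ?_⟩
  have key : ∀ s ∈ Set.Ioi (0:ℝ),
      gEq s (cH3H3 ((gEq s).symm x) ((gEq s).symm y)) =
      cN5R x y + (s * (x 3 * y 2 - x 2 * y 3)) • (Pi.single 5 1 : Fin 6 → ℝ) := by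
    intro s hs
    have hs' : (0:ℝ) < s := hs
    simp only [gEq, dif_pos hs', LinearEquiv.symm_symm]
    funext i
    fin_cases i <;>
      simp [cH3H3, cN5R, Amap, Bmap, LinearEquiv.ofLinear_apply,
        LinearEquiv.ofLinear_symm_apply, Pi.single_apply, Matrix.cons_val_succ] <;>
      field_simp <;> ring
  have hcont : Filter.Tendsto
      (fun s : ℝ => cN5R x y + (s * (x 3 * y 2 - x 2 * y 3)) • (Pi.single 5 1 : Fin 6 → ℝ))
      (nhdsWithin 0 (Set.Ioi 0)) (nhds (cN5R x y)) := by
    have hc : Continuous (fun s : ℝ =>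
        cN5R x y + (s * (x 3 * y 2 - x 2 * y 3)) • (Pi.single 5 1 : Fin 6 → ℝ)) := by
      fun_prop
    have := hc.tendsto 0
    simp only [zero_mul, zero_smul, add_zero] at this
    exact this.mono_left nhdsWithin_le_nhds
  exact hcont.congr' (Filter.eventuallyEq_of_mem self_mem_nhdsWithin
    (fun s hs => (key s hs).symm))
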